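/- arXiv:2406.06267 — 2 statements merged into one kernel-verified Lean document; each statement's English description precedes it below -/
import Mathlib

section
/- Let Γ be a reduced finite simple graph. Then 2 divides |Aut(Γ)| if and only if 2 divides |Aut^π(Γ)|. -/
open SimpleGraph

/-- A graph is reduced (vertex determining) if distinct vertices have distinct
open neighborhoods. -/
def Reduced {V : Type*} (G : SimpleGraph V) : Prop :=
  ∀ u v : V, G.neighborSet u = G.neighborSet v → u = v

/-- The group of two-fold projections of a graph: permutations mapping every
open neighborhood onto some open neighborhood. -/
def autPi {V : Type*} [Fintype V] (G : SimpleGraph V) : Subgroup (Equiv.Perm V) where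
  carrier := {π : Equiv.Perm V | ∀ v : V, ∃ w : V, π '' G.neighborSet v = G.neighborSet w}
  one_mem' := by
    intro v
    exact ⟨v, by simp⟩
  mul_mem' := by
    intro a b ha hb v
    obtain ⟨w, hw⟩ := hb v
    obtain ⟨u, hu⟩ := ha w
    refine ⟨u, ?_⟩
    rw [Equiv.Perm.coe_mul, Set.image_comp, hw, hu]
  inv_mem' := by
    intro a ha v
    have hfin : (Set.range G.neighborSet).Finite := Set.finite_range _
    have hmaps : Set.MapsTo (Set.image ⇑a) (Set.range G.neighborSet)
        (Set.range G.neighborSet) := by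
      rintro s ⟨u, rfl⟩
      obtain ⟨w, hw⟩ := ha u
      exact ⟨w, hw.symm⟩
    have hinj : Set.InjOn (Set.image ⇑a) (Set.range G.neighborSet) :=
      (Set.image_injective.mpr a.injective).injOn
    have hbij := (hfin.injOn_iff_bijOn_of_mapsTo hmaps).mp hinj
    obtain ⟨s, hs, hsv⟩ := hbij.surjOn ⟨v, rfl⟩
    obtain ⟨w, rfl⟩ := hs
    refine ⟨w, ?_⟩
    have : (⇑a⁻¹) '' ((⇑a) '' G.neighborSet w) = G.neighborSet w := by
      rw [← Set.image_comp]
      simp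
    rw [← this, hsv]

/-- The automorphism group of a graph, as a subgroup of the permutations of its vertices. -/
def autG {V : Type*} [Fintype V] (G : SimpleGraph V) : Subgroup (Equiv.Perm V) where
  carrier := {π : Equiv.Perm V | ∀ v w : V, G.Adj (π v) (π w) ↔ G.Adj v w}
  one_mem' := by intro v w; rfl
  mul_mem' := by
    intro a b ha hb v w
    rw [Equiv.Perm.coe_mul, Function.comp_apply, Function.comp_apply, ha, hb]
  inv_mem' := by
    intro a ha v w
    conv_rhs => rw [← (a.apply_symm_apply v : a (a⁻¹ v) = v), ← (a.apply_symm_apply w : a (a⁻¹ w) = w)]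
    rw [ha]
    rfl

/-!
A permutation `π` lies in `Aut^π(Γ)` exactly when it has a partner `σ` with
`σ v ~ π w ↔ v ~ w` for all `v, w`, i.e. when `(σ, π)` is an automorphism of the bipartite
double cover of `Γ`; for a reduced graph this partner is unique. The relation is symmetric in
`σ` and `π`, so swapping the two coordinates is an involution of the set of such pairs, which
is in bijection with `Aut^π(Γ)`. Its fixed points are the pairs `(π, π)` with `π ∈ Aut(Γ)`,
and an involution of a finite set has as many fixed points as elements, modulo 2.
-/

theorem Function.Involutive.natCard_modEq_natCard_fixedPoints {α : Type*} [Finite α]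
    {f : α → α} (hf : Function.Involutive f) :
    Nat.card α ≡ Nat.card (Function.fixedPoints f) [MOD 2] := by
  classical
  have := Fintype.ofFinite α
  let g : Function.End α := f
  have hsq : g ^ 2 ^ 1 = 1 := funext hf
  have : Fact (Nat.Prime 2) := ⟨Nat.prime_two⟩
  simpa only [Nat.card_eq_fintype_card] using Equiv.Perm.card_fixedPoints_modEq hsq

namespace SimpleGraph

variable {V : Type*} {G : SimpleGraph V}

def IsTwofoldAut (G : SimpleGraph V) (σ π : Equiv.Perm V) : Prop :=
  ∀ v w, G.Adj (σ v) (π w) ↔ G.Adj v w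

def twofoldAut (G : SimpleGraph V) : Set (Equiv.Perm V × Equiv.Perm V) :=
  {p | G.IsTwofoldAut p.1 p.2}

namespace IsTwofoldAut

variable {σ σ' π : Equiv.Perm V}

theorem swap (h : G.IsTwofoldAut σ π) : G.IsTwofoldAut π σ := fun v w => by
  rw [G.adj_comm, h, G.adj_comm]

theorem image_neighborSet (h : G.IsTwofoldAut σ π) (v : V) :
    π '' G.neighborSet v = G.neighborSet (σ v) := by
  ext x
  obtain ⟨w, rfl⟩ := π.surjective x
  rw [π.injective.mem_set_image, mem_neighborSet, mem_neighborSet, h]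

theorem left_unique (hred : Reduced G) (h : G.IsTwofoldAut σ π) (h' : G.IsTwofoldAut σ' π) :
    σ = σ' :=
  Equiv.ext fun v => hred _ _ <| (h.image_neighborSet v).symm.trans (h'.image_neighborSet v)

theorem mem_autPi [Fintype V] (h : G.IsTwofoldAut σ π) : π ∈ autPi G :=
  fun v => ⟨σ v, h.image_neighborSet v⟩

end IsTwofoldAut

theorem isTwofoldAut_self_iff [Fintype V] {π : Equiv.Perm V} :
    G.IsTwofoldAut π π ↔ π ∈ autG G :=
  Iff.rfl

theorem exists_isTwofoldAut_of_mem_autPi [Fintype V] (hred : Reduced G) {π : Equiv.Perm V}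
    (hπ : π ∈ autPi G) : ∃ σ, G.IsTwofoldAut σ π := by
  choose σ hσ using hπ
  have hinj : Function.Injective σ := fun u v huv =>
    hred _ _ <| Set.image_injective.mpr π.injective <| (hσ u).trans (huv ▸ (hσ v).symm)
  refine ⟨Equiv.ofBijective σ (Finite.injective_iff_bijective.mp hinj), fun v w => ?_⟩
  rw [Equiv.ofBijective_apply, ← mem_neighborSet, ← hσ, π.injective.mem_set_image,
    mem_neighborSet]

theorem natCard_twofoldAut [Fintype V] (hred : Reduced G) :
    Nat.card G.twofoldAut = Nat.card (autPi G) := by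
  refine Nat.card_congr <| Equiv.ofBijective (fun p => ⟨p.1.2, IsTwofoldAut.mem_autPi p.2⟩)
    ⟨fun p q hpq => ?_, fun π => ?_⟩
  · have hsnd : p.1.2 = q.1.2 := congrArg Subtype.val hpq
    have hfst : p.1.1 = q.1.1 := IsTwofoldAut.left_unique hred p.2 (hsnd ▸ q.2)
    exact Subtype.ext (Prod.ext hfst hsnd)
  · obtain ⟨σ, hσ⟩ := exists_isTwofoldAut_of_mem_autPi hred π.2
    exact ⟨⟨(σ, π), hσ⟩, rfl⟩

def twofoldAutSwap (G : SimpleGraph V) : G.twofoldAut → G.twofoldAut :=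
  fun p => ⟨p.1.swap, IsTwofoldAut.swap p.2⟩

theorem twofoldAutSwap_involutive : Function.Involutive G.twofoldAutSwap :=
  fun _ => rfl

theorem isFixedPt_twofoldAutSwap_iff {p : G.twofoldAut} :
    Function.IsFixedPt G.twofoldAutSwap p ↔ p.1.1 = p.1.2 := by
  simp only [Function.IsFixedPt, twofoldAutSwap, Subtype.ext_iff, Prod.ext_iff, Prod.fst_swap,
    Prod.snd_swap]
  exact ⟨fun h => h.2, fun h => ⟨h.symm, h⟩⟩

theorem natCard_fixedPoints_twofoldAutSwap [Fintype V] :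
    Nat.card (Function.fixedPoints G.twofoldAutSwap) = Nat.card (autG G) := by
  refine Nat.card_congr
    { toFun := fun p => ⟨p.1.1.2, isTwofoldAut_self_iff.mp ?_⟩
      invFun := fun π => ⟨⟨(π, π), isTwofoldAut_self_iff.mpr π.2⟩, rfl⟩
      left_inv := fun p => ?_
      right_inv := fun _ => rfl }
  · have h : G.IsTwofoldAut p.1.1.1 p.1.1.2 := p.1.2
    rwa [isFixedPt_twofoldAutSwap_iff.mp p.2] at h
  · exact Subtype.ext <| Subtype.ext <| Prod.ext (isFixedPt_twofoldAutSwap_iff.mp p.2).symm rfl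

end SimpleGraph

/-- For a reduced finite simple graph Γ, 2 divides |Aut(Γ)| iff 2 divides |Aut^π(Γ)|. -/
theorem stmt_6 {V : Type*} [Fintype V] (G : SimpleGraph V) (hred : Reduced G) :
    2 ∣ Nat.card (autG G) ↔ 2 ∣ Nat.card (autPi G) := by
  have h := G.twofoldAutSwap_involutive.natCard_modEq_natCard_fixedPoints
  rw [G.natCard_twofoldAut hred, G.natCard_fixedPoints_twofoldAutSwap] at h
  exact (h.dvd_iff dvd_rfl).symm
end

section
/- Let Γ = (V,E) be a reduced finite simple graph. Then every two-fold projection of Γ is an automorphism of the square graph Γ², i.e. Aut^π(Γ) ≤ Aut(Γ²). -/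
open SimpleGraph

/-- The square of a graph: distinct vertices are adjacent iff they have a common neighbor. -/
def square {V : Type*} (G : SimpleGraph V) : SimpleGraph V where
  Adj v w := v ≠ w ∧ ∃ u, G.Adj v u ∧ G.Adj u w
  symm := ⟨fun v w h => ⟨h.1.symm, h.2.choose, h.2.choose_spec.2.symm, h.2.choose_spec.1.symm⟩⟩
  loopless := ⟨fun v h => h.1 rfl⟩

lemma square_adj_apply_of_mem_autPi {V : Type*} [Fintype V] (G : SimpleGraph V)
    {π : Equiv.Perm V} (hπ : π ∈ autPi G) {v w : V} (h : (square G).Adj v w) :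
    (square G).Adj (π v) (π w) := by
  obtain ⟨hne, u, hvu, huw⟩ := h
  obtain ⟨x, hx⟩ := hπ u
  have hv : π v ∈ G.neighborSet x := hx ▸ ⟨v, hvu.symm, rfl⟩
  have hw : π w ∈ G.neighborSet x := hx ▸ ⟨w, huw, rfl⟩
  exact ⟨π.injective.ne hne, x, hv.symm, hw⟩

theorem stmt_7_general {V : Type*} [Fintype V] (G : SimpleGraph V) :
    autPi G ≤ autG (square G) := by
  intro π hπ v w
  refine ⟨fun h => ?_, square_adj_apply_of_mem_autPi G hπ⟩
  simpa using square_adj_apply_of_mem_autPi G ((autPi G).inv_mem hπ) h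

/-- For a reduced finite simple graph Γ, every two-fold projection is an automorphism
of the square graph Γ²: Aut^π(Γ) ≤ Aut(Γ²). -/
theorem stmt_7 {V : Type*} [Fintype V] (G : SimpleGraph V) (hred : Reduced G) :
    autPi G ≤ autG (square G) :=
  stmt_7_general G
end
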